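/- arXiv:1102.3867 — 2 statements merged into one kernel-verified Lean document; each statement's English description precedes it below -/
import Mathlib

section
/- Let m ≥ 2, T > 0, and define p(x,t) = φ(x)·exp(m²π²(t-T)/(m-1)²) where φ(x) = sin(mπx) on [0,1/m) and φ(x) = (1-m)sin(π(mx-1)/(m-1)) on [1/m,1]. Then p satisfies -p_t = p_{xx} + h in (0,1/m)×(0,T) and in (1/m,1)×(0,T), where h(x,t) = ((m-2)m³π²/(m-1)²)·sin(mπx)·exp(m²π²(t-T)/(m-1)²) for x ∈ [0,1/m) and h(x,t) = 0 for x ∈ [1/m,1]; moreover h ≥ 0 on [0,1]×[0,T] and p ≤ 0 on [1/m,1]×[0,T]. -/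
/-!
On each side of `1/m`, `p` is a separated mode `c sin (a ξ + b) e^{k (t - T)}` with
`k = m²π²/(m-1)²`, and such a mode satisfies `-p_t = p_xx + (a² - k) p`. On `(1/m, 1)` the
frequency is `a = mπ/(m-1)`, so `a² = k` and the residual vanishes; on `(0, 1/m)` it is `a = mπ`,
and `(a² - k) p` is exactly `h`. The sign claims hold because both sine arguments stay in `[0, π]`.
-/

open Real Set Filter Topology

theorem hasDerivAt_sin_affine (a b x : ℝ) :
    HasDerivAt (fun ξ => sin (a * ξ + b)) (a * cos (a * x + b)) x := by
  simpa [mul_comm] using (((hasDerivAt_id x).const_mul a).add_const b).sin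

theorem hasDerivAt_cos_affine (a b x : ℝ) :
    HasDerivAt (fun ξ => cos (a * ξ + b)) (-a * sin (a * x + b)) x := by
  simpa [mul_comm] using (((hasDerivAt_id x).const_mul a).add_const b).cos

theorem deriv_deriv_sin_affine (a b x : ℝ) :
    deriv (deriv fun ξ => sin (a * ξ + b)) x = -a ^ 2 * sin (a * x + b) := by
  have hderiv : deriv (fun ξ => sin (a * ξ + b)) = fun ξ => a * cos (a * ξ + b) :=
    funext fun ξ => (hasDerivAt_sin_affine a b ξ).deriv
  rw [hderiv, ((hasDerivAt_cos_affine a b x).const_mul a).deriv]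
  ring

theorem hasDerivAt_exp_mul_sub (k T t : ℝ) :
    HasDerivAt (fun τ => exp (k * (τ - T))) (k * exp (k * (t - T))) t := by
  simpa [mul_comm] using (((hasDerivAt_id t).sub_const T).const_mul k).exp

theorem neg_deriv_eq_deriv_deriv_add_of_sine_mode {p : ℝ → ℝ → ℝ} {U : Set ℝ} {x : ℝ}
    (c a b k T t : ℝ) (hU : U ∈ 𝓝 x)
    (hpU : ∀ ξ ∈ U, ∀ τ, p ξ τ = c * sin (a * ξ + b) * exp (k * (τ - T))) :
    -deriv (fun τ => p x τ) t = deriv (deriv fun ξ => p ξ t) x + (a ^ 2 - k) * p x t := by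
  have htime : (fun τ => p x τ) = fun τ => c * sin (a * x + b) * exp (k * (τ - T)) :=
    funext (hpU x (mem_of_mem_nhds hU))
  have hspace : (fun ξ => p ξ t) =ᶠ[𝓝 x] fun ξ => c * exp (k * (t - T)) * sin (a * ξ + b) := by
    filter_upwards [hU] with ξ hξ
    rw [hpU ξ hξ t]
    ring
  rw [htime, ((hasDerivAt_exp_mul_sub k T t).const_mul _).deriv, hspace.deriv.deriv_eq,
    deriv_const_mul_field', deriv_const_mul_field, deriv_deriv_sin_affine,
    hpU x (mem_of_mem_nhds hU) t]
  ring

theorem sin_mul_pi_mul_nonneg {m x : ℝ} (hm : 0 < m) (hx : x ∈ Icc 0 (1 / m)) :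
    0 ≤ sin (m * π * x) := by
  have hmx : m * x ≤ 1 := by rw [← le_div_iff₀' hm]; exact hx.2
  apply sin_nonneg_of_nonneg_of_le_pi
  · have := hx.1; positivity
  · nlinarith [pi_pos]

theorem sin_pi_mul_sub_one_div_nonneg {m x : ℝ} (hm : 1 < m) (hx : x ∈ Icc (1 / m) 1) :
    0 ≤ sin (π * (m * x - 1) / (m - 1)) := by
  have hmx : 1 ≤ m * x := by rw [← div_le_iff₀' (by linarith)]; exact hx.1
  apply sin_nonneg_of_nonneg_of_le_pi
  · apply div_nonneg _ (by linarith)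
    nlinarith [pi_pos]
  · have hmx' : m * x ≤ m := by nlinarith [hx.2]
    rw [div_le_iff₀ (by linarith)]
    nlinarith [pi_pos]

theorem adjoint_solution_properties_general (m : ℕ) (hm : 2 ≤ m) (T : ℝ)
    (p h : ℝ → ℝ → ℝ)
    (hp : ∀ x t : ℝ, p x t =
      (if x < 1 / (m : ℝ) then Real.sin (m * π * x)
       else (1 - (m : ℝ)) * Real.sin (π * ((m : ℝ) * x - 1) / ((m : ℝ) - 1))) *
      Real.exp ((m : ℝ) ^ 2 * π ^ 2 * (t - T) / ((m : ℝ) - 1) ^ 2))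
    (hh : ∀ x t : ℝ, h x t =
      if x < 1 / (m : ℝ) then
        (((m : ℝ) - 2) * (m : ℝ) ^ 3 * π ^ 2 / ((m : ℝ) - 1) ^ 2) *
          Real.sin (m * π * x) *
          Real.exp ((m : ℝ) ^ 2 * π ^ 2 * (t - T) / ((m : ℝ) - 1) ^ 2)
      else 0) :
    (∀ x ∈ Set.Ioo (0 : ℝ) (1 / (m : ℝ)), ∀ t ∈ Set.Ioo (0 : ℝ) T,
      -(deriv (fun τ => p x τ) t) = deriv (deriv (fun ξ => p ξ t)) x + h x t) ∧
    (∀ x ∈ Set.Ioo (1 / (m : ℝ)) 1, ∀ t ∈ Set.Ioo (0 : ℝ) T,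
      -(deriv (fun τ => p x τ) t) = deriv (deriv (fun ξ => p ξ t)) x + h x t) ∧
    (∀ x ∈ Set.Icc (0 : ℝ) 1, ∀ t ∈ Set.Icc (0 : ℝ) T, 0 ≤ h x t) ∧
    (∀ x ∈ Set.Icc (1 / (m : ℝ)) 1, ∀ t ∈ Set.Icc (0 : ℝ) T, p x t ≤ 0) := by
  have hm : (2 : ℝ) ≤ m := by exact_mod_cast hm
  have hm1 : (m : ℝ) - 1 ≠ 0 := by linarith
  refine ⟨fun x hx t _ => ?_, fun x hx t _ => ?_, fun x hx t _ => ?_, fun x hx t _ => ?_⟩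
  · rw [neg_deriv_eq_deriv_deriv_add_of_sine_mode 1 (m * π) 0
      ((m : ℝ) ^ 2 * π ^ 2 / ((m : ℝ) - 1) ^ 2) T t (isOpen_Ioo.mem_nhds hx) fun ξ hξ τ => by
        rw [hp, if_pos hξ.2, add_zero, one_mul, mul_div_right_comm]]
    rw [hh, if_pos hx.2, hp, if_pos hx.2]
    field_simp
    ring
  · rw [neg_deriv_eq_deriv_deriv_add_of_sine_mode (1 - m) (π * m / (m - 1)) (-(π / (m - 1)))
      ((m : ℝ) ^ 2 * π ^ 2 / ((m : ℝ) - 1) ^ 2) T t (isOpen_Ioo.mem_nhds hx) fun ξ hξ τ => by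
        rw [hp, if_neg (not_lt.2 hξ.1.le)]; congr 3 <;> ring]
    rw [hh, if_neg (not_lt.2 hx.1.le), div_pow, mul_pow]
    ring
  · rw [hh]
    split_ifs with hxm
    · have hcoeff : 0 ≤ ((m : ℝ) - 2) * m ^ 3 * π ^ 2 / ((m : ℝ) - 1) ^ 2 :=
        div_nonneg (mul_nonneg (mul_nonneg (by linarith) (by positivity)) (by positivity))
          (sq_nonneg _)
      exact mul_nonneg (mul_nonneg hcoeff (sin_mul_pi_mul_nonneg (by linarith) ⟨hx.1, hxm.le⟩))
        (exp_pos _).le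
    · rfl
  · rw [hp, if_neg (not_lt.2 hx.1)]
    exact mul_nonpos_of_nonpos_of_nonneg
      (mul_nonpos_of_nonpos_of_nonneg (by linarith)
        (sin_pi_mul_sub_one_div_nonneg (by linarith) hx))
      (exp_pos _).le

theorem adjoint_solution_properties (m : ℕ) (hm : 2 ≤ m) (T : ℝ) (hT : 0 < T)
    (p h : ℝ → ℝ → ℝ)
    (hp : ∀ x t : ℝ, p x t =
      (if x < 1 / (m : ℝ) then Real.sin (m * π * x)
       else (1 - (m : ℝ)) * Real.sin (π * ((m : ℝ) * x - 1) / ((m : ℝ) - 1))) *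
      Real.exp ((m : ℝ) ^ 2 * π ^ 2 * (t - T) / ((m : ℝ) - 1) ^ 2))
    (hh : ∀ x t : ℝ, h x t =
      if x < 1 / (m : ℝ) then
        (((m : ℝ) - 2) * (m : ℝ) ^ 3 * π ^ 2 / ((m : ℝ) - 1) ^ 2) *
          Real.sin (m * π * x) *
          Real.exp ((m : ℝ) ^ 2 * π ^ 2 * (t - T) / ((m : ℝ) - 1) ^ 2)
      else 0) :
    (∀ x ∈ Set.Ioo (0 : ℝ) (1 / (m : ℝ)), ∀ t ∈ Set.Ioo (0 : ℝ) T,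
      -(deriv (fun τ => p x τ) t) = deriv (deriv (fun ξ => p ξ t)) x + h x t) ∧
    (∀ x ∈ Set.Ioo (1 / (m : ℝ)) 1, ∀ t ∈ Set.Ioo (0 : ℝ) T,
      -(deriv (fun τ => p x τ) t) = deriv (deriv (fun ξ => p ξ t)) x + h x t) ∧
    (∀ x ∈ Set.Icc (0 : ℝ) 1, ∀ t ∈ Set.Icc (0 : ℝ) T, 0 ≤ h x t) ∧
    (∀ x ∈ Set.Icc (1 / (m : ℝ)) 1, ∀ t ∈ Set.Icc (0 : ℝ) T, p x t ≤ 0) :=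
  adjoint_solution_properties_general m hm T p h hp hh
end

section
/- Let v ∈ C[0,1] with v ≤ 0, and let y ∈ C^{2,1}([0,1]×[0,T]) be a classical nonnegative solution of y_t = y_{xx} + v(x)y with y(0,t) = y(1,t) = 0 and y(·,0) = y₀ ∈ C²[0,1], y₀ ≥ 0, y₀ ≢ 0, y₀(0)=y₀(1)=0. Then 0 ≤ y_x(0,t) ≤ e·max_{x∈[0,1]}(y₀'(x)·e^{y₀(x)}) for all t ∈ [0,T]. -/
/-!
With `ρ = max (y₀' e^{y₀}) > 0`, Bernstein's function `w = e^y + ρ e^{1-x} - 1` is a strict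
subsolution of the heat equation: `w_t - w_xx = e^y (v y - y_x²) - ρ e^{1-x} < 0`. So `w` attains
its maximum over `[0,1] × [0,T]` on the parabolic boundary, where it is at most `ρ e`: on `t = 0`
because `x ↦ e^{y₀ x} + ρ e^{1-x}` is decreasing. As `w(0,t) = ρ e`, the one-sided derivative
`w_x(0,t) = y_x(0,t) - ρ e` is nonpositive. The lower bound holds since `y ≥ 0 = y(0,t)`.
-/

open Real Set Filter Topology

section OneVariable

variable {f : ℝ → ℝ} {a : ℝ}

theorem IsLocalMaxOn.deriv_nonpos_of_Ici (h : IsLocalMaxOn f (Ici a) a) : deriv f a ≤ 0 := by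
  by_cases hf : DifferentiableAt ℝ f a
  · have hcone : (1 : ℝ) ∈ posTangentConeAt (Ici a) a :=
      mem_posTangentConeAt_of_segment_subset <| by simp [Icc_subset_Ici_self]
    simpa using h.hasFDerivWithinAt_nonpos hf.hasDerivAt.hasDerivWithinAt.hasFDerivWithinAt hcone
  · exact (deriv_zero_of_not_differentiableAt hf).le

theorem IsLocalMaxOn.deriv_nonneg_of_Iic (h : IsLocalMaxOn f (Iic a) a) : 0 ≤ deriv f a := by
  by_cases hf : DifferentiableAt ℝ f a
  · have hcone : (-1 : ℝ) ∈ posTangentConeAt (Iic a) a :=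
      mem_posTangentConeAt_of_segment_subset <| by
        simp [segment_eq_Icc' a, Icc_subset_Iic_self]
    simpa using h.hasFDerivWithinAt_nonpos hf.hasDerivAt.hasDerivWithinAt.hasFDerivWithinAt hcone
  · exact (deriv_zero_of_not_differentiableAt hf).ge

theorem IsLocalMinOn.deriv_nonneg_of_Ici (h : IsLocalMinOn f (Ici a) a) : 0 ≤ deriv f a := by
  simpa [← deriv.neg'] using h.neg.deriv_nonpos_of_Ici

theorem IsLocalMax.deriv_deriv_nonpos (h : IsLocalMax f a) (hc : ContinuousAt f a) :
    deriv (deriv f) a ≤ 0 := by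
  by_contra! hpos
  have hmin := isLocalMin_of_deriv_deriv_pos hpos h.deriv_eq_zero hc
  have hconst : f =ᶠ[𝓝 a] fun _ => f a := by
    filter_upwards [h, hmin] with x hmax hmin using le_antisymm hmax hmin
  simp [hconst.deriv.deriv_eq] at hpos

theorem exists_mem_Ioo_deriv_pos (hf : Differentiable ℝ f) {b : ℝ} (hab : a < b)
    (h : f a < f b) : ∃ c ∈ Ioo a b, 0 < deriv f c := by
  obtain ⟨c, hc, hslope⟩ := exists_deriv_eq_slope f hab hf.continuous.continuousOn
    hf.differentiableOn
  exact ⟨c, hc, hslope ▸ div_pos (sub_pos.2 h) (sub_pos.2 hab)⟩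

end OneVariable

section MaximumPrinciple

variable {w : ℝ → ℝ → ℝ} {a b T M : ℝ}

theorem le_of_strictHeatSubsolution_Ioc (hw : Continuous fun q : ℝ × ℝ => w q.1 q.2)
    (hsub : ∀ x ∈ Ioo a b, ∀ t ∈ Ioc 0 T,
      deriv (fun τ => w x τ) t < deriv (deriv fun ξ => w ξ t) x)
    (ha : ∀ t ∈ Icc 0 T, w a t ≤ M) (hb : ∀ t ∈ Icc 0 T, w b t ≤ M)
    (h0 : ∀ x ∈ Icc a b, w x 0 ≤ M) :
    ∀ x ∈ Icc a b, ∀ t ∈ Icc 0 T, w x t ≤ M := by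
  intro x hx t ht
  obtain ⟨⟨xm, tm⟩, ⟨hxm, htm⟩, hmax⟩ := (isCompact_Icc.prod isCompact_Icc).exists_isMaxOn
    ⟨(x, t), hx, ht⟩ hw.continuousOn
  refine le_trans (hmax (mk_mem_prod hx ht)) ?_
  rcases hxm.1.eq_or_lt with rfl | hxa
  · exact ha tm htm
  rcases hxm.2.eq_or_lt with rfl | hxb
  · exact hb tm htm
  rcases htm.1.eq_or_lt with rfl | htm0
  · exact h0 xm hxm
  exfalso
  have hspace : deriv (deriv fun ξ => w ξ tm) xm ≤ 0 := by
    have hmax_x : IsMaxOn (fun ξ => w ξ tm) (Icc a b) xm := fun ξ hξ => hmax (mk_mem_prod hξ htm)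
    exact (hmax_x.isLocalMax (Icc_mem_nhds hxa hxb)).deriv_deriv_nonpos
      (hw.comp (continuous_id.prodMk continuous_const)).continuousAt
  have htime : 0 ≤ deriv (fun τ => w xm τ) tm := by
    refine IsLocalMaxOn.deriv_nonneg_of_Iic ?_
    filter_upwards [Ioc_mem_nhdsLE htm0] with τ hτ
    exact hmax (mk_mem_prod hxm ⟨hτ.1.le, hτ.2.trans htm.2⟩)
  exact (hsub xm ⟨hxa, hxb⟩ tm ⟨htm0, htm.2⟩).not_ge (hspace.trans htime)

theorem le_of_strictHeatSubsolution (hw : Continuous fun q : ℝ × ℝ => w q.1 q.2)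
    (hsub : ∀ x ∈ Ioo a b, ∀ t ∈ Ioo 0 T,
      deriv (fun τ => w x τ) t < deriv (deriv fun ξ => w ξ t) x)
    (ha : ∀ t ∈ Icc 0 T, w a t ≤ M) (hb : ∀ t ∈ Icc 0 T, w b t ≤ M)
    (h0 : ∀ x ∈ Icc a b, w x 0 ≤ M) :
    ∀ x ∈ Icc a b, ∀ t ∈ Icc 0 T, w x t ≤ M := by
  intro x hx
  have hIco : Ico 0 T ⊆ {t | w x t ≤ M} := fun t ht =>
    le_of_strictHeatSubsolution_Ioc hw
      (fun ξ hξ τ hτ => hsub ξ hξ τ ⟨hτ.1, hτ.2.trans_lt ht.2⟩)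
      (fun τ hτ => ha τ ⟨hτ.1, hτ.2.trans ht.2.le⟩) (fun τ hτ => hb τ ⟨hτ.1, hτ.2.trans ht.2.le⟩)
      h0 x hx t ⟨ht.1, le_rfl⟩
  rcases eq_or_ne 0 T with rfl | hT
  · intro t ht
    rw [le_antisymm ht.2 ht.1]
    exact h0 x hx
  · rw [← closure_Ico hT]
    exact closure_minimal hIco
      (isClosed_le (hw.comp (continuous_const.prodMk continuous_id)) continuous_const)

end MaximumPrinciple

section Bernstein

noncomputable def bernsteinFunction (ρ : ℝ) (u : ℝ → ℝ) (x : ℝ) : ℝ :=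
  exp (u x) + ρ * exp (1 - x) - 1

theorem hasDerivAt_mul_exp_one_sub (ρ x : ℝ) :
    HasDerivAt (fun x => ρ * exp (1 - x)) (-(ρ * exp (1 - x))) x :=
  (((hasDerivAt_id x).const_sub 1).exp.const_mul ρ).congr_deriv (by simp)

variable {ρ : ℝ} {u : ℝ → ℝ}

theorem bernsteinFunction_zero (hu : u 0 = 0) : bernsteinFunction ρ u 0 = ρ * exp 1 := by
  simp [bernsteinFunction, hu]

theorem hasDerivAt_bernsteinFunction {u' x : ℝ} (hu : HasDerivAt u u' x) :
    HasDerivAt (bernsteinFunction ρ u) (exp (u x) * u' - ρ * exp (1 - x)) x :=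
  ((hu.exp.add (hasDerivAt_mul_exp_one_sub ρ x)).sub_const 1).congr_deriv (by ring)

theorem deriv_bernsteinFunction (hu : Differentiable ℝ u) :
    deriv (bernsteinFunction ρ u) = fun x => exp (u x) * deriv u x - ρ * exp (1 - x) :=
  funext fun x => (hasDerivAt_bernsteinFunction (hu x).hasDerivAt).deriv

theorem deriv_deriv_bernsteinFunction {x : ℝ} (hu : Differentiable ℝ u)
    (hu' : DifferentiableAt ℝ (deriv u) x) :
    deriv (deriv (bernsteinFunction ρ u)) x =
      exp (u x) * (deriv (deriv u) x + deriv u x ^ 2) + ρ * exp (1 - x) := by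
  rw [deriv_bernsteinFunction hu]
  have h : HasDerivAt (fun x => exp (u x) * deriv u x - ρ * exp (1 - x)) _ x :=
    ((hu x).hasDerivAt.exp.mul hu'.hasDerivAt).sub (hasDerivAt_mul_exp_one_sub ρ x)
  rw [h.deriv]
  ring

theorem antitoneOn_bernsteinFunction (hρ : 0 ≤ ρ) (hu : Differentiable ℝ u)
    (hbound : ∀ x ∈ Icc (0 : ℝ) 1, deriv u x * exp (u x) ≤ ρ) :
    AntitoneOn (bernsteinFunction ρ u) (Icc 0 1) := by
  refine antitoneOn_of_deriv_nonpos (convex_Icc 0 1) ?_ ?_ fun x hx => ?_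
  · exact fun x _ =>
      (hasDerivAt_bernsteinFunction (hu x).hasDerivAt).continuousAt.continuousWithinAt
  · exact fun x _ =>
      (hasDerivAt_bernsteinFunction (hu x).hasDerivAt).differentiableAt.differentiableWithinAt
  rw [interior_Icc] at hx
  rw [deriv_bernsteinFunction hu]
  have hexp : 1 ≤ exp (1 - x) := one_le_exp (by linarith [hx.2])
  nlinarith [hbound x (Ioo_subset_Icc_self hx)]

theorem bernsteinFunction_strictHeatSubsolution {y : ℝ → ℝ → ℝ} {x t : ℝ} (hρ : 0 < ρ)
    (hyt : DifferentiableAt ℝ (fun τ => y x τ) t) (hyx : Differentiable ℝ fun ξ => y ξ t)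
    (hyxx : DifferentiableAt ℝ (deriv fun ξ => y ξ t) x)
    (hsub : deriv (fun τ => y x τ) t ≤ deriv (deriv fun ξ => y ξ t) x) :
    deriv (fun τ => bernsteinFunction ρ (fun ξ => y ξ τ) x) t <
      deriv (deriv (bernsteinFunction ρ fun ξ => y ξ t)) x := by
  have htime : deriv (fun τ => bernsteinFunction ρ (fun ξ => y ξ τ) x) t =
      exp (y x t) * deriv (fun τ => y x τ) t :=
    ((hyt.hasDerivAt.exp.add_const _).sub_const 1).deriv
  rw [htime, deriv_deriv_bernsteinFunction hyx hyxx]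
  have hbarrier : 0 < ρ * exp (1 - x) := by positivity
  have hgrad : 0 ≤ exp (y x t) * deriv (fun ξ => y ξ t) x ^ 2 := by positivity
  nlinarith [mul_le_mul_of_nonneg_left hsub (exp_pos (y x t)).le]

theorem deriv_le_of_bernsteinFunction_le (hu : DifferentiableAt ℝ u 0) (hu0 : u 0 = 0)
    (h : ∀ x ∈ Icc (0 : ℝ) 1, bernsteinFunction ρ u x ≤ ρ * exp 1) :
    deriv u 0 ≤ exp 1 * ρ := by
  have hmax : IsLocalMaxOn (bernsteinFunction ρ u) (Ici 0) 0 := by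
    filter_upwards [Icc_mem_nhdsGE one_pos] with x hx
    rw [bernsteinFunction_zero hu0]
    exact h x hx
  have hslope := hmax.deriv_nonpos_of_Ici
  rw [(hasDerivAt_bernsteinFunction hu.hasDerivAt).deriv, hu0, exp_zero, one_mul, sub_zero]
    at hslope
  linarith

theorem bernsteinFunction_le_of_heatSubsolution {y : ℝ → ℝ → ℝ} {y₀ : ℝ → ℝ} {T : ℝ}
    (hρ : 0 < ρ) (hy : ContDiff ℝ 2 fun q : ℝ × ℝ => y q.1 q.2)
    (hsub : ∀ x ∈ Ioo (0 : ℝ) 1, ∀ t ∈ Ioo 0 T,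
      deriv (fun τ => y x τ) t ≤ deriv (deriv fun ξ => y ξ t) x)
    (hbc : ∀ t ∈ Icc 0 T, y 0 t = 0 ∧ y 1 t = 0) (hic : ∀ x, y x 0 = y₀ x)
    (hy₀ : Differentiable ℝ y₀) (hy₀0 : y₀ 0 = 0)
    (hy₀ρ : ∀ x ∈ Icc (0 : ℝ) 1, deriv y₀ x * exp (y₀ x) ≤ ρ) :
    ∀ x ∈ Icc (0 : ℝ) 1, ∀ t ∈ Icc 0 T, bernsteinFunction ρ (fun ξ => y ξ t) x ≤ ρ * exp 1 := by
  have hslice : ∀ t, ContDiff ℝ 2 fun ξ => y ξ t := fun t =>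
    hy.comp (contDiff_id.prodMk contDiff_const)
  refine le_of_strictHeatSubsolution ?_ (fun x hx t ht => ?_) (fun t ht => ?_) (fun t ht => ?_)
    (fun x hx => ?_)
  · exact ((continuous_exp.comp hy.continuous).add (continuous_const.mul
      (continuous_exp.comp (continuous_const.sub continuous_fst)))).sub continuous_const
  · exact bernsteinFunction_strictHeatSubsolution hρ
      ((hy.comp (contDiff_const.prodMk contDiff_id)).differentiable two_ne_zero t)
      ((hslice t).differentiable two_ne_zero) ((hslice t).differentiable_deriv_two x)
      (hsub x hx t ht)
  · exact (bernsteinFunction_zero (hbc t ht).1).le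
  · simpa [bernsteinFunction, (hbc t ht).2] using
      le_mul_of_one_le_right hρ.le (one_le_exp zero_le_one)
  · simp only [hic]
    exact (antitoneOn_bernsteinFunction hρ.le hy₀ hy₀ρ (left_mem_Icc.2 zero_le_one) hx hx.1).trans
      (bernsteinFunction_zero hy₀0).le

end Bernstein

section InitialProfile

variable {u : ℝ → ℝ} {a b : ℝ}

theorem deriv_mul_exp_le_sSup (hu : ContDiff ℝ 1 u) {x : ℝ} (hx : x ∈ Icc a b) :
    deriv u x * exp (u x) ≤ sSup ((fun x => deriv u x * exp (u x)) '' Icc a b) :=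
  le_csSup ((isCompact_Icc.image ((hu.continuous_deriv le_rfl).mul
    (continuous_exp.comp hu.continuous))).bddAbove) (mem_image_of_mem _ hx)

theorem sSup_deriv_mul_exp_pos (hu : ContDiff ℝ 1 u) (hua : u a = 0)
    (hnn : ∀ x ∈ Icc a b, 0 ≤ u x) (hne : ∃ x ∈ Icc a b, u x ≠ 0) :
    0 < sSup ((fun x => deriv u x * exp (u x)) '' Icc a b) := by
  obtain ⟨x₁, hx₁, hne⟩ := hne
  have hlt : u a < u x₁ := by rw [hua]; exact (hnn x₁ hx₁).lt_of_ne' hne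
  obtain ⟨c, hc, hc'⟩ := exists_mem_Ioo_deriv_pos (hu.differentiable one_ne_zero)
    (hx₁.1.lt_of_ne (by rintro rfl; exact hlt.ne rfl)) hlt
  exact (mul_pos hc' (exp_pos _)).trans_le
    (deriv_mul_exp_le_sSup hu ⟨hc.1.le, hc.2.le.trans hx₁.2⟩)

end InitialProfile

theorem normal_derivative_bound_at_zero_general (T : ℝ)
    (v : ℝ → ℝ)
    (hv : ∀ x ∈ Set.Icc (0:ℝ) 1, v x ≤ 0)
    (y₀ : ℝ → ℝ) (hy₀reg : ContDiff ℝ 2 y₀)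
    (hy₀pos : ∀ x ∈ Set.Icc (0:ℝ) 1, 0 ≤ y₀ x)
    (hy₀ne : ∃ x ∈ Set.Icc (0:ℝ) 1, y₀ x ≠ 0)
    (hy₀bc : y₀ 0 = 0 ∧ y₀ 1 = 0)
    (y : ℝ → ℝ → ℝ)
    (hyreg : ContDiff ℝ 2 (fun q : ℝ × ℝ => y q.1 q.2))
    (hynn : ∀ x ∈ Set.Icc (0:ℝ) 1, ∀ t ∈ Set.Icc (0:ℝ) T, 0 ≤ y x t)
    (hPDE : ∀ x ∈ Set.Ioo (0:ℝ) 1, ∀ t ∈ Set.Ioo (0:ℝ) T,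
      deriv (fun τ => y x τ) t = deriv (deriv (fun ξ => y ξ t)) x + v x * y x t)
    (hbc : ∀ t ∈ Set.Icc (0:ℝ) T, y 0 t = 0 ∧ y 1 t = 0)
    (hic : ∀ x : ℝ, y x 0 = y₀ x) :
    ∀ t ∈ Set.Icc (0:ℝ) T,
      0 ≤ deriv (fun ξ => y ξ t) 0 ∧
      deriv (fun ξ => y ξ t) 0 ≤
        Real.exp 1 * sSup ((fun x => deriv y₀ x * Real.exp (y₀ x)) '' Set.Icc 0 1) := by
  have hsub : ∀ x ∈ Ioo (0 : ℝ) 1, ∀ t ∈ Ioo 0 T,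
      deriv (fun τ => y x τ) t ≤ deriv (deriv fun ξ => y ξ t) x := fun x hx t ht => by
    have hvy := mul_nonpos_of_nonpos_of_nonneg (hv x (Ioo_subset_Icc_self hx))
      (hynn x (Ioo_subset_Icc_self hx) t (Ioo_subset_Icc_self ht))
    linarith [hPDE x hx t ht]
  have hy₀C1 : ContDiff ℝ 1 y₀ := hy₀reg.of_le one_le_two
  have hw := bernsteinFunction_le_of_heatSubsolution
    (sSup_deriv_mul_exp_pos hy₀C1 hy₀bc.1 hy₀pos hy₀ne) hyreg hsub hbc hic
    (hy₀C1.differentiable one_ne_zero) hy₀bc.1 fun x hx => deriv_mul_exp_le_sSup hy₀C1 hx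
  intro t ht
  have hslice : Differentiable ℝ fun ξ => y ξ t :=
    (hyreg.comp (contDiff_id.prodMk contDiff_const)).differentiable two_ne_zero
  refine ⟨IsLocalMinOn.deriv_nonneg_of_Ici ?_,
    deriv_le_of_bernsteinFunction_le (hslice 0) (hbc t ht).1 fun x hx => hw x hx t ht⟩
  filter_upwards [Icc_mem_nhdsGE one_pos] with x hx
  simpa [(hbc t ht).1] using hynn x hx t ht

/-- Proposition 4.1 b): bounds on the spatial derivative at `x = 0`. -/
theorem normal_derivative_bound_at_zero (T : ℝ) (hT : 0 < T)
    (v : ℝ → ℝ) (hvcont : ContinuousOn v (Set.Icc 0 1))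
    (hv : ∀ x ∈ Set.Icc (0:ℝ) 1, v x ≤ 0)
    (y₀ : ℝ → ℝ) (hy₀reg : ContDiff ℝ 2 y₀)
    (hy₀pos : ∀ x ∈ Set.Icc (0:ℝ) 1, 0 ≤ y₀ x)
    (hy₀ne : ∃ x ∈ Set.Icc (0:ℝ) 1, y₀ x ≠ 0)
    (hy₀bc : y₀ 0 = 0 ∧ y₀ 1 = 0)
    (y : ℝ → ℝ → ℝ)
    (hyreg : ContDiff ℝ 2 (fun q : ℝ × ℝ => y q.1 q.2))
    (hynn : ∀ x ∈ Set.Icc (0:ℝ) 1, ∀ t ∈ Set.Icc (0:ℝ) T, 0 ≤ y x t)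
    (hPDE : ∀ x ∈ Set.Ioo (0:ℝ) 1, ∀ t ∈ Set.Ioo (0:ℝ) T,
      deriv (fun τ => y x τ) t = deriv (deriv (fun ξ => y ξ t)) x + v x * y x t)
    (hbc : ∀ t ∈ Set.Icc (0:ℝ) T, y 0 t = 0 ∧ y 1 t = 0)
    (hic : ∀ x : ℝ, y x 0 = y₀ x) :
    ∀ t ∈ Set.Icc (0:ℝ) T,
      0 ≤ deriv (fun ξ => y ξ t) 0 ∧
      deriv (fun ξ => y ξ t) 0 ≤
        Real.exp 1 * sSup ((fun x => deriv y₀ x * Real.exp (y₀ x)) '' Set.Icc 0 1) :=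
  normal_derivative_bound_at_zero_general T v hv y₀ hy₀reg hy₀pos hy₀ne hy₀bc y hyreg hynn hPDE hbc
    hic
end
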